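/- Let n ≥ 11. If λ is a maximal unrefinable partition of T_n − d with largest part 2n − 5 and d is not a part of λ, then d = n − 6, and the unique such partition is (1, 2, ..., n−7, n−5, n−4, n−2, n+1, 2n−5). -/
import Mathlib


/-- The n-th triangular number. -/
def T (n : ℕ) : ℕ := n * (n + 1) / 2

/-- A partition of `N` into distinct parts, represented as a finite set of
positive integers with at least two elements summing to `N`. -/
def DistinctPartition (N : ℕ) (S : Finset ℕ) : Prop :=
  (∀ x ∈ S, 0 < x) ∧ 2 ≤ S.card ∧ S.sum id = N

/-- The missing parts: integers in `{1, …, λ_t}` not appearing in the partition. -/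
def Missing (S : Finset ℕ) : Finset ℕ := Finset.Icc 1 (S.sup id) \ S

/-- No part is the sum of two distinct missing parts. -/
def Unrefinable (S : Finset ℕ) : Prop :=
  ∀ a ∈ Missing S, ∀ b ∈ Missing S, a ≠ b → a + b ∉ S

def UnrefinablePartition (N : ℕ) (S : Finset ℕ) : Prop :=
  DistinctPartition N S ∧ Unrefinable S

/-- A maximal unrefinable partition: its largest part is maximal among the
largest parts of all unrefinable partitions of `N`. -/
def MaximalUnrefinable (N : ℕ) (S : Finset ℕ) : Prop :=
  UnrefinablePartition N S ∧
    ∀ S' : Finset ℕ, UnrefinablePartition N S' → S'.sup id ≤ S.sup id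

lemma gaussIoc (m : ℕ) : (Finset.Ioc 0 m).sum id = T m := by
  induction m with
  | zero => simp [T]
  | succ k ih =>
    rw [Finset.sum_Ioc_succ_top (Nat.zero_le _), ih]
    obtain ⟨c1, hc1⟩ := Nat.even_mul_succ_self k
    obtain ⟨c2, hc2⟩ := Nat.even_mul_succ_self (k+1)
    have h2 : (k+1)*(k+1+1) = k*(k+1) + 2*(k+1) := by ring
    simp only [T, id]
    omega

lemma Tsplit (n : ℕ) (hn : 11 ≤ n) : T n = T (n-3) + (3*n-3) := by
  rw [← gaussIoc n, ← gaussIoc (n-3),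
    ← Finset.sum_Ioc_consecutive id (show (0:ℕ) ≤ n-3 by omega) (show n-3 ≤ n by omega)]
  have h3 : Finset.Ioc (n-3) n = {n-2, n-1, n} := by
    ext x; simp [Finset.mem_Ioc, Finset.mem_insert]; omega
  rw [h3, Finset.sum_insert (by simp; omega), Finset.sum_insert (by simp; omega),
    Finset.sum_singleton]
  simp only [id]; omega

/-- The witness partition with largest part `2n-4` for `d = n-7`. -/
lemma witnessW (n : ℕ) (hn : 11 ≤ n) :
    UnrefinablePartition (T n - (n-7))
      (insert (2*n-4) (insert (n+2) ((Finset.Icc 1 (n-3)).erase (n-6)))) ∧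
    (insert (2*n-4) (insert (n+2) ((Finset.Icc 1 (n-3)).erase (n-6)))).sup id = 2*n-4 := by
  set W := insert (2*n-4) (insert (n+2) ((Finset.Icc 1 (n-3)).erase (n-6))) with hWdef
  have hWmem : ∀ x, x ∈ W ↔ (x = 2*n-4 ∨ x = n+2 ∨ (x ≠ n-6 ∧ 1 ≤ x ∧ x ≤ n-3)) := by
    intro x
    simp [hWdef, Finset.mem_insert, Finset.mem_erase, Finset.mem_Icc]
  have hWsup : W.sup id = 2*n-4 := by
    apply le_antisymm
    · apply Finset.sup_le
      intro x hx
      rw [hWmem] at hx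
      simp only [id]
      omega
    · exact Finset.le_sup (f := id) ((hWmem (2*n-4)).mpr (Or.inl rfl))
  refine ⟨⟨⟨?_, ?_, ?_⟩, ?_⟩, hWsup⟩
  · intro x hx; rw [hWmem] at hx; omega
  · exact Finset.one_lt_card.mpr ⟨2*n-4, (hWmem _).mpr (Or.inl rfl),
      1, (hWmem 1).mpr (by right; right; omega), by omega⟩
  · have he : ∑ x ∈ (Finset.Icc 1 (n-3)).erase (n-6), id x + id (n-6)
        = ∑ x ∈ Finset.Icc 1 (n-3), id x :=
      Finset.sum_erase_add _ _ (by simp [Finset.mem_Icc]; omega)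
    have hicc : Finset.Icc 1 (n-3) = Finset.Ioc 0 (n-3) := by
      ext x; simp [Finset.mem_Icc, Finset.mem_Ioc]; omega
    have hiccsum : ∑ x ∈ Finset.Icc 1 (n-3), id x = T (n-3) := by
      rw [hicc]; exact gaussIoc _
    rw [hiccsum] at he
    have hT := Tsplit n hn
    rw [hWdef, Finset.sum_insert (by
        simp [Finset.mem_insert, Finset.mem_erase, Finset.mem_Icc]; omega),
      Finset.sum_insert (by simp [Finset.mem_erase, Finset.mem_Icc]; omega)]
    simp only [id] at he ⊢
    omega
  · intro a ha b hb hab hmem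
    have ha' : 1 ≤ a ∧ a ≤ 2*n-4 ∧ ¬(a = 2*n-4 ∨ a = n+2 ∨ (a ≠ n-6 ∧ 1 ≤ a ∧ a ≤ n-3)) := by
      rw [Missing, hWsup, Finset.mem_sdiff, Finset.mem_Icc] at ha
      exact ⟨ha.1.1, ha.1.2, fun hh => ha.2 ((hWmem a).mpr hh)⟩
    have hb' : 1 ≤ b ∧ b ≤ 2*n-4 ∧ ¬(b = 2*n-4 ∨ b = n+2 ∨ (b ≠ n-6 ∧ 1 ≤ b ∧ b ≤ n-3)) := by
      rw [Missing, hWsup, Finset.mem_sdiff, Finset.mem_Icc] at hb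
      exact ⟨hb.1.1, hb.1.2, fun hh => hb.2 ((hWmem b).mpr hh)⟩
    have hmem' := (hWmem _).mp hmem
    omega


lemma keyL (n d : ℕ) (S : Finset ℕ) (hn : 11 ≤ n) (hd1 : 1 ≤ d) (hd2 : d ≤ n - 1)
    (hpos : ∀ x ∈ S, 0 < x) (hcard : 2 ≤ S.card) (hsum : S.sum id = T n - d)
    (hunref : Unrefinable S) (hsup : S.sup id = 2 * n - 5) :
    ∃ L : ℕ → ℕ,
      (∀ k, 1 ≤ k → k ≤ n-3 →
        ((k ∈ Finset.Icc 1 (2*n-5) \ S ↔ L k = 2*n-5-2*k) ∧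
         ((2*n-5-k) ∈ Finset.Icc 1 (2*n-5) \ S ↔ L k = 0) ∧
         (L k = 0 ∨ L k = 2*n-5-2*k ∨ L k = 2*n-5-k))) ∧
      (∑ k ∈ Finset.Ioc 0 (n-3), L k = n+2-d) := by
  have hne : S.Nonempty := Finset.card_pos.mp (by omega)
  have hS5 : 2*n-5 ∈ S := by
    obtain ⟨b, hbS, hb⟩ := Finset.exists_mem_eq_sup S hne id
    have hb' : b = 2*n-5 := by rw [hsup] at hb; simp only [id] at hb; omega
    rwa [hb'] at hbS
  have hle : ∀ x ∈ S, x ≤ 2*n-5 := fun x hx => by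
    have := Finset.le_sup (f := id) hx; rw [hsup] at this; exact this
  have hSsub : S ⊆ Finset.Icc 1 (2*n-5) := fun x hx =>
    Finset.mem_Icc.mpr ⟨hpos x hx, hle x hx⟩
  obtain ⟨M, hMdef⟩ : ∃ M : Finset ℕ, M = Finset.Icc 1 (2*n-5) \ S := ⟨_, rfl⟩
  have hMmem : ∀ x, x ∈ M ↔ (1 ≤ x ∧ x ≤ 2*n-5 ∧ x ∉ S) := by
    intro x; simp [hMdef, Finset.mem_sdiff, Finset.mem_Icc, and_assoc]
  have hMiss : Missing S = M := by rw [Missing, hsup]; exact hMdef.symm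
  have hunref' : ∀ a ∈ M, ∀ b ∈ M, a ≠ b → a + b ∉ S := by
    intro a ha b hb hab
    exact hunref a (by rw [hMiss]; exact ha) b (by rw [hMiss]; exact hb) hab
  have hpair : ∀ k, 1 ≤ k → k ≤ n-3 → ¬(k ∈ M ∧ (2*n-5-k) ∈ M) := by
    rintro k h1 h2 ⟨hk, hk'⟩
    refine hunref' k hk _ hk' (by omega) ?_
    rw [show k + (2*n-5-k) = 2*n-5 by omega]
    exact hS5
  obtain ⟨g, hgk⟩ : ∃ g : ℕ → ℕ, ∀ k,
      g k = (if k ∈ M then k else 0) + (if 2*n-5-k ∈ M then 2*n-5-k else 0) := ⟨_, fun _ => rfl⟩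
  obtain ⟨L, hLk⟩ : ∃ L : ℕ → ℕ, ∀ k, L k = (2*n-5-k) - g k := ⟨_, fun _ => rfl⟩
  have htri : ∀ k, 1 ≤ k → k ≤ n-3 →
      (k ∈ M ∧ (2*n-5-k) ∉ M ∧ L k = 2*n-5-2*k) ∨
      ((2*n-5-k) ∈ M ∧ k ∉ M ∧ L k = 0) ∨
      (k ∉ M ∧ (2*n-5-k) ∉ M ∧ L k = 2*n-5-k) := by
    intro k h1 h2
    have hp := hpair k h1 h2
    by_cases hk : k ∈ M
    · have hk' : (2*n-5-k) ∉ M := fun hh => hp ⟨hk, hh⟩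
      refine Or.inl ⟨hk, hk', ?_⟩
      rw [hLk, hgk, if_pos hk, if_neg hk']
      omega
    · by_cases hk' : (2*n-5-k) ∈ M
      · refine Or.inr (Or.inl ⟨hk', hk, ?_⟩)
        rw [hLk, hgk, if_neg hk, if_pos hk']
        omega
      · refine Or.inr (Or.inr ⟨hk, hk', ?_⟩)
        rw [hLk, hgk, if_neg hk, if_neg hk']
        omega
  have hgle : ∀ k, 1 ≤ k → k ≤ n-3 → 2*n-5-k = g k + L k := by
    intro k h1 h2
    have hp := hpair k h1 h2
    rw [hLk, hgk]
    by_cases hk : k ∈ M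
    · have hk' : (2*n-5-k) ∉ M := fun hh => hp ⟨hk, hh⟩
      rw [if_pos hk, if_neg hk']; omega
    · by_cases hk' : (2*n-5-k) ∈ M
      · rw [if_neg hk, if_pos hk']; omega
      · rw [if_neg hk, if_neg hk']; omega
  have hMsub : M ⊆ Finset.Ioc 0 (2*n-6) := by
    intro x hx
    rw [hMmem] at hx
    rw [Finset.mem_Ioc]
    have : x ≠ 2*n-5 := fun hh => hx.2.2 (hh ▸ hS5)
    omega
  have e1 : M.sum id = ∑ x ∈ Finset.Ioc 0 (2*n-6), (if x ∈ M then x else 0) := by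
    rw [Finset.sum_ite_mem, Finset.inter_eq_right.mpr hMsub]
    exact Finset.sum_congr rfl fun _ _ => rfl
  have e2 : ∑ x ∈ Finset.Ioc 0 (2*n-6), (if x ∈ M then x else 0)
      = (∑ k ∈ Finset.Ioc 0 (n-3), (if k ∈ M then k else 0))
        + ∑ k ∈ Finset.Ioc (n-3) (2*n-6), (if k ∈ M then k else 0) :=
    (Finset.sum_Ioc_consecutive _ (by omega) (by omega)).symm
  have e3 : ∑ k ∈ Finset.Ioc (n-3) (2*n-6), (if k ∈ M then k else 0)
      = ∑ k ∈ Finset.Ioc 0 (n-3), (if 2*n-5-k ∈ M then 2*n-5-k else 0) := by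
    apply Finset.sum_nbij' (i := fun k => 2*n-5-k) (j := fun k => 2*n-5-k)
    · intro a ha; simp only [Finset.mem_Ioc] at *; omega
    · intro a ha; simp only [Finset.mem_Ioc] at *; omega
    · intro a ha; simp only [Finset.mem_Ioc] at *; omega
    · intro a ha; simp only [Finset.mem_Ioc] at *; omega
    · intro a ha
      simp only [Finset.mem_Ioc] at ha
      rw [show 2*n-5-(2*n-5-a) = a by omega]
  have e4 : M.sum id = ∑ k ∈ Finset.Ioc 0 (n-3), g k := by
    rw [e1, e2, e3, ← Finset.sum_add_distrib]
    exact Finset.sum_congr rfl fun k _ => (hgk k).symm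
  have e6 : ∑ k ∈ Finset.Ioc 0 (n-3), (2*n-5-k)
      = (∑ k ∈ Finset.Ioc 0 (n-3), g k) + ∑ k ∈ Finset.Ioc 0 (n-3), L k := by
    rw [← Finset.sum_add_distrib]
    apply Finset.sum_congr rfl
    intro k hk
    rw [Finset.mem_Ioc] at hk
    exact hgle k (by omega) hk.2
  have e7 : ∑ k ∈ Finset.Ioc 0 (n-3), (2*n-5-k) = ∑ k ∈ Finset.Ioc (n-3) (2*n-6), id k := by
    symm
    apply Finset.sum_nbij' (i := fun k => 2*n-5-k) (j := fun k => 2*n-5-k) <;>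
      intro a ha <;> simp only [Finset.mem_Ioc, id] at ha ⊢ <;> omega
  have hIcc25 : (Finset.Icc 1 (2*n-5)).sum id
      = (∑ k ∈ Finset.Ioc 0 (n-3), id k) + (∑ k ∈ Finset.Ioc (n-3) (2*n-6), id k) + (2*n-5) := by
    have hio : Finset.Icc 1 (2*n-5) = Finset.Ioc 0 (2*n-5) := by
      ext x; simp [Finset.mem_Icc, Finset.mem_Ioc]; omega
    rw [hio,
      ← Finset.sum_Ioc_consecutive id (show (0:ℕ) ≤ 2*n-6 by omega) (show 2*n-6 ≤ 2*n-5 by omega),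
      ← Finset.sum_Ioc_consecutive id (show (0:ℕ) ≤ n-3 by omega) (show n-3 ≤ 2*n-6 by omega)]
    have hlast : Finset.Ioc (2*n-6) (2*n-5) = {2*n-5} := by
      ext x; simp [Finset.mem_Ioc]; omega
    rw [hlast, Finset.sum_singleton]
    simp only [id]
  have hTn : T n = (∑ k ∈ Finset.Ioc 0 (n-3), id k) + (3*n-3) := by
    rw [← gaussIoc n,
      ← Finset.sum_Ioc_consecutive id (show (0:ℕ) ≤ n-3 by omega) (show n-3 ≤ n by omega)]
    have h3 : Finset.Ioc (n-3) n = {n-2, n-1, n} := by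
      ext x; simp [Finset.mem_Ioc, Finset.mem_insert]; omega
    rw [h3, Finset.sum_insert (by simp; omega), Finset.sum_insert (by simp; omega),
      Finset.sum_singleton]
    simp only [id]; omega
  have hMS : M.sum id + S.sum id = (Finset.Icc 1 (2*n-5)).sum id := by
    rw [hMdef]; exact Finset.sum_sdiff hSsub
  have hsumL : ∑ k ∈ Finset.Ioc 0 (n-3), L k = n + 2 - d := by
    rw [hsum] at hMS
    omega
  refine ⟨L, ?_, hsumL⟩
  intro k h1 h2
  rw [← hMdef]
  refine ⟨?_, ?_, ?_⟩
  · rcases htri k h1 h2 with ⟨hk, _, hv⟩ | ⟨_, hk, hv⟩ | ⟨hk, _, hv⟩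
    · exact iff_of_true hk hv
    · exact iff_of_false hk (by omega)
    · exact iff_of_false hk (by omega)
  · rcases htri k h1 h2 with ⟨_, hk, hv⟩ | ⟨hk, _, hv⟩ | ⟨_, hk, hv⟩
    · exact iff_of_false hk (by omega)
    · exact iff_of_true hk hv
    · exact iff_of_false hk (by omega)
  · rcases htri k h1 h2 with ⟨_,_,hv⟩|⟨_,_,hv⟩|⟨_,_,hv⟩ <;> omega

set_option maxHeartbeats 1000000 in
lemma charS (n : ℕ) (S : Finset ℕ) (L : ℕ → ℕ) (hn : 11 ≤ n)
    (hpos : ∀ x ∈ S, 0 < x) (hle : ∀ x ∈ S, x ≤ 2*n-5) (hS5 : 2*n-5 ∈ S)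
    (hL : ∀ k, 1 ≤ k → k ≤ n-3 →
      ((k ∈ Finset.Icc 1 (2*n-5) \ S ↔ L k = 2*n-5-2*k) ∧
       ((2*n-5-k) ∈ Finset.Icc 1 (2*n-5) \ S ↔ L k = 0) ∧
       (L k = 0 ∨ L k = 2*n-5-2*k ∨ L k = 2*n-5-k)))
    (hzero : ∀ k, 1 ≤ k → k ≤ n-8 → L k = 0)
    (k3 : L (n-3) = 2*n-5-2*(n-3)) (k4 : L (n-4) = 0) (k5 : L (n-5) = 0) (k7 : L (n-7) = 0)
    (l6 : L (n-6) = 2*n-5-2*(n-6)) (hdM : n-6 ∈ Finset.Icc 1 (2*n-5) \ S) :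
    ∀ x, x ∈ S ↔ (x = 2*n-5 ∨ x = n+1 ∨ x = n-2 ∨ x = n-4 ∨ x = n-5 ∨ (1 ≤ x ∧ x ≤ n-7)) := by
  obtain ⟨m, rfl⟩ : ∃ m, n = m + 11 := ⟨n - 11, by omega⟩
  have hMd : ∀ x, x ∈ Finset.Icc 1 (2*(m+11)-5) \ S ↔ (1 ≤ x ∧ x ≤ 2*(m+11)-5 ∧ x ∉ S) := by
    intro x; simp [Finset.mem_sdiff, Finset.mem_Icc, and_assoc]
  have hz' : ∀ k, 1 ≤ k → k ≤ (m+11)-3 → k ≠ (m+11)-3 → k ≠ (m+11)-6 → L k = 0 := by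
    intro k h1 h2 h3 h4
    rcases (by omega : k ≤ (m+11)-8 ∨ k = (m+11)-7 ∨ k = (m+11)-5 ∨ k = (m+11)-4)
      with hk|hk|hk|hk
    · exact hzero k h1 hk
    · rw [hk]; exact k7
    · rw [hk]; exact k5
    · rw [hk]; exact k4
  have hMn3 : (m+11)-3 ∈ Finset.Icc 1 (2*(m+11)-5) \ S :=
    ((hL ((m+11)-3) (by omega) (by omega)).1).mpr k3
  intro x
  have hxS : x ∈ S ↔ (1 ≤ x ∧ x ≤ 2*(m+11)-5 ∧ x ∉ Finset.Icc 1 (2*(m+11)-5) \ S) := by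
    constructor
    · intro hx
      exact ⟨hpos x hx, hle x hx, fun hm => ((hMd x).mp hm).2.2 hx⟩
    · rintro ⟨h1, h2, h3⟩
      by_contra hxs
      exact h3 ((hMd x).mpr ⟨h1, h2, hxs⟩)
  rcases (by omega : (x = 0 ∨ 2*(m+11)-5 < x) ∨ x = 2*(m+11)-5 ∨ (1 ≤ x ∧ x ≤ (m+11)-3) ∨
      ((m+11)-2 ≤ x ∧ x ≤ 2*(m+11)-6)) with hr | hr | hr | hr
  · exact iff_of_false (fun hx => by have := hpos x hx; have := hle x hx; omega) (by omega)
  · exact iff_of_true (hr ▸ hS5) (by omega)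
  · by_cases h3 : x = (m+11)-3
    · exact iff_of_false (fun hx => ((hMd x).mp (h3 ▸ hMn3)).2.2 hx) (by omega)
    · by_cases h6 : x = (m+11)-6
      · exact iff_of_false (fun hx => ((hMd x).mp (h6 ▸ hdM)).2.2 hx) (by omega)
      · have hL0 := hz' x hr.1 hr.2 h3 h6
        have hxM : x ∉ Finset.Icc 1 (2*(m+11)-5) \ S := fun hm => by
          have := ((hL x hr.1 hr.2).1).mp hm; omega
        exact iff_of_true (hxS.mpr ⟨hr.1, by omega, hxM⟩) (by omega)
  · have hbig : x ∈ Finset.Icc 1 (2*(m+11)-5) \ S ↔ L (2*(m+11)-5-x) = 0 := by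
      have hh := (hL (2*(m+11)-5-x) (by omega) (by omega)).2.1
      rwa [show 2*(m+11)-5-(2*(m+11)-5-x) = x by omega] at hh
    by_cases h2 : x = (m+11)-2
    · have hxM : x ∉ Finset.Icc 1 (2*(m+11)-5) \ S := fun hm => by
        have hv := hbig.mp hm
        rw [show 2*(m+11)-5-x = (m+11)-3 by omega] at hv
        omega
      exact iff_of_true (hxS.mpr ⟨by omega, by omega, hxM⟩) (by omega)
    · by_cases h1 : x = (m+11)+1
      · have hxM : x ∉ Finset.Icc 1 (2*(m+11)-5) \ S := fun hm => by
          have hv := hbig.mp hm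
          rw [show 2*(m+11)-5-x = (m+11)-6 by omega] at hv
          omega
        exact iff_of_true (hxS.mpr ⟨by omega, by omega, hxM⟩) (by omega)
      · have hL0 := hz' (2*(m+11)-5-x) (by omega) (by omega) (by omega) (by omega)
        have hxM : x ∈ Finset.Icc 1 (2*(m+11)-5) \ S := hbig.mpr hL0
        exact iff_of_false (fun hx => ((hMd x).mp hxM).2.2 hx) (by omega)

set_option maxHeartbeats 1000000 in
lemma classify (n d : ℕ) (S : Finset ℕ) (hn : 11 ≤ n) (hd1 : 1 ≤ d) (hd2 : d ≤ n - 1)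
    (hpos : ∀ x ∈ S, 0 < x) (hcard : 2 ≤ S.card) (hsum : S.sum id = T n - d)
    (hunref : Unrefinable S) (hsup : S.sup id = 2 * n - 5) (hdS : d ∉ S) :
    (d = n - 6 ∧ ∀ x, (x ∈ S ↔ (x = 2*n-5 ∨ x = n+1 ∨ x = n-2 ∨ x = n-4 ∨ x = n-5 ∨
      (1 ≤ x ∧ x ≤ n-7)))) ∨ d = n - 7 := by
  obtain ⟨m, rfl⟩ : ∃ m, n = m + 11 := ⟨n - 11, by omega⟩
  obtain ⟨L, hL, hsumL⟩ := keyL (m+11) d S hn hd1 hd2 hpos hcard hsum hunref hsup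
  have hne : S.Nonempty := Finset.card_pos.mp (by omega)
  have hS5 : 2*(m+11)-5 ∈ S := by
    obtain ⟨b, hbS, hb⟩ := Finset.exists_mem_eq_sup S hne id
    have hb' : b = 2*(m+11)-5 := by rw [hsup] at hb; simp only [id] at hb; omega
    rwa [hb'] at hbS
  have hle : ∀ x ∈ S, x ≤ 2*(m+11)-5 := fun x hx => by
    have := Finset.le_sup (f := id) hx; rw [hsup] at this; exact this
  have hMd : ∀ x, x ∈ Finset.Icc 1 (2*(m+11)-5) \ S ↔ (1 ≤ x ∧ x ≤ 2*(m+11)-5 ∧ x ∉ S) := by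
    intro x; simp [Finset.mem_sdiff, Finset.mem_Icc, and_assoc]
  have hdM : d ∈ Finset.Icc 1 (2*(m+11)-5) \ S := (hMd d).mpr ⟨hd1, by omega, hdS⟩
  have hLb : ∀ k, 1 ≤ k → k ≤ (m+11)-3 → L k ≤ (m+11)+2-d := by
    intro k h1 h2
    calc L k ≤ ∑ j ∈ Finset.Ioc 0 ((m+11)-3), L j :=
          Finset.single_le_sum (fun i _ => Nat.zero_le _) (Finset.mem_Ioc.mpr ⟨by omega, h2⟩)
      _ = (m+11)+2-d := hsumL
  have hLd : d ≤ (m+11)-3 → L d = 2*(m+11)-5-2*d := fun h2 => ((hL d hd1 h2).1).mp hdM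
  have hdge : (m+11)-7 ≤ d := by
    by_contra hlt
    push_neg at hlt
    have h1 := hLd (by omega)
    have h2 := hLb d hd1 (by omega)
    omega
  have hzero : ∀ k, 1 ≤ k → k ≤ (m+11)-8 → L k = 0 := by
    intro k h1 h2
    have h3 := (hL k h1 (by omega)).2.2
    have h4 := hLb k h1 (by omega)
    omega
  have hsum5 : L ((m+11)-7) + L ((m+11)-6) + L ((m+11)-5) + L ((m+11)-4) + L ((m+11)-3)
      = (m+11)+2-d := by
    have hs : ∑ k ∈ Finset.Ioc ((m+11)-8) ((m+11)-3), L k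
        = ∑ k ∈ Finset.Ioc 0 ((m+11)-3), L k := by
      apply Finset.sum_subset
      · intro x hx; rw [Finset.mem_Ioc] at *; omega
      · intro x hx hx'
        rw [Finset.mem_Ioc] at hx
        simp only [Finset.mem_Ioc] at hx'
        exact hzero x (by omega) (by omega)
    rw [hsumL] at hs
    have h5 : Finset.Ioc ((m+11)-8) ((m+11)-3)
        = {(m+11)-7, (m+11)-6, (m+11)-5, (m+11)-4, (m+11)-3} := by
      ext x; simp only [Finset.mem_Ioc, Finset.mem_insert, Finset.mem_singleton]; omega
    rw [h5, Finset.sum_insert (by simp only [Finset.mem_insert, Finset.mem_singleton]; omega),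
      Finset.sum_insert (by simp only [Finset.mem_insert, Finset.mem_singleton]; omega),
      Finset.sum_insert (by simp only [Finset.mem_insert, Finset.mem_singleton]; omega),
      Finset.sum_insert (by simp only [Finset.mem_singleton]; omega),
      Finset.sum_singleton] at hs
    omega
  have key : (d = (m+11)-6 ∧ L ((m+11)-3) = 2*(m+11)-5-2*((m+11)-3) ∧ L ((m+11)-4) = 0 ∧
      L ((m+11)-5) = 0 ∧ L ((m+11)-7) = 0) ∨ d = (m+11)-7 := by
    rcases (by omega : d = (m+11)-7 ∨ d = (m+11)-6 ∨ d = (m+11)-5 ∨ d = (m+11)-4 ∨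
        d = (m+11)-3 ∨ d = (m+11)-2 ∨ d = (m+11)-1) with hd|hd|hd|hd|hd|hd|hd
    · exact Or.inr hd
    · subst hd
      have l6 := hLd (by omega)
      have k7 : L ((m+11)-7) = 0 := by
        have := (hL ((m+11)-7) (by omega) (by omega)).2.2; omega
      have k5 : L ((m+11)-5) = 0 := by
        have := (hL ((m+11)-5) (by omega) (by omega)).2.2; omega
      have k4 : L ((m+11)-4) = 0 := by
        have := (hL ((m+11)-4) (by omega) (by omega)).2.2; omega
      have k3 : L ((m+11)-3) = 2*(m+11)-5-2*((m+11)-3) := by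
        have := (hL ((m+11)-3) (by omega) (by omega)).2.2; omega
      exact Or.inl ⟨rfl, k3, k4, k5, k7⟩
    · exfalso
      subst hd
      have l5 := hLd (by omega)
      have k7 : L ((m+11)-7) = 0 := by
        have := (hL ((m+11)-7) (by omega) (by omega)).2.2; omega
      have k6 : L ((m+11)-6) = 0 := by
        have := (hL ((m+11)-6) (by omega) (by omega)).2.2; omega
      have k4 : L ((m+11)-4) = 0 := by
        have := (hL ((m+11)-4) (by omega) (by omega)).2.2; omega
      have := (hL ((m+11)-3) (by omega) (by omega)).2.2
      omega
    · exfalso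
      subst hd
      have l4 := hLd (by omega)
      have k7 : L ((m+11)-7) = 0 := by
        have := (hL ((m+11)-7) (by omega) (by omega)).2.2; omega
      have k6 : L ((m+11)-6) = 0 := by
        have := (hL ((m+11)-6) (by omega) (by omega)).2.2; omega
      have k5 : L ((m+11)-5) = 0 := by
        have := (hL ((m+11)-5) (by omega) (by omega)).2.2; omega
      have := (hL ((m+11)-3) (by omega) (by omega)).2.2
      omega
    · exfalso
      subst hd
      have l3 := hLd (by omega)
      have k7 : L ((m+11)-7) = 0 := by
        have := (hL ((m+11)-7) (by omega) (by omega)).2.2; omega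
      have k6 : L ((m+11)-6) = 0 := by
        have := (hL ((m+11)-6) (by omega) (by omega)).2.2; omega
      have k5 : L ((m+11)-5) = 0 := by
        have := (hL ((m+11)-5) (by omega) (by omega)).2.2; omega
      have := (hL ((m+11)-4) (by omega) (by omega)).2.2
      omega
    · exfalso
      subst hd
      have l3 : L ((m+11)-3) = 0 :=
        ((hL ((m+11)-3) (by omega) (by omega)).2.1).mp
          (by rw [show 2*(m+11)-5-((m+11)-3) = (m+11)-2 by omega]; exact hdM)
      have k7 : L ((m+11)-7) = 0 := by
        have := (hL ((m+11)-7) (by omega) (by omega)).2.2; omega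
      have k6 : L ((m+11)-6) = 0 := by
        have := (hL ((m+11)-6) (by omega) (by omega)).2.2; omega
      have k5 : L ((m+11)-5) = 0 := by
        have := (hL ((m+11)-5) (by omega) (by omega)).2.2; omega
      have := (hL ((m+11)-4) (by omega) (by omega)).2.2
      omega
    · exfalso
      subst hd
      have l4 : L ((m+11)-4) = 0 :=
        ((hL ((m+11)-4) (by omega) (by omega)).2.1).mp
          (by rw [show 2*(m+11)-5-((m+11)-4) = (m+11)-1 by omega]; exact hdM)
      have k7 : L ((m+11)-7) = 0 := by
        have := (hL ((m+11)-7) (by omega) (by omega)).2.2; omega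
      have k6 : L ((m+11)-6) = 0 := by
        have := (hL ((m+11)-6) (by omega) (by omega)).2.2; omega
      have k5 : L ((m+11)-5) = 0 := by
        have := (hL ((m+11)-5) (by omega) (by omega)).2.2; omega
      have := (hL ((m+11)-3) (by omega) (by omega)).2.2
      omega
  rcases key with ⟨hd, k3, k4, k5, k7⟩ | hd
  · have l6 : L ((m+11)-6) = 2*(m+11)-5-2*((m+11)-6) :=
      ((hL ((m+11)-6) (by omega) (by omega)).1).mp (hd ▸ hdM)
    refine Or.inl ⟨hd, ?_⟩
    exact charS (m+11) S L hn hpos hle hS5 hL hzero k3 k4 k5 k7 l6 (hd ▸ hdM)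
  · exact Or.inr hd

theorem max_2n_sub_5_d_not_mem (n d : ℕ) (hn : 11 ≤ n) (hd1 : 1 ≤ d) (hd2 : d ≤ n - 1)
    (S : Finset ℕ) (h : MaximalUnrefinable (T n - d) S)
    (hsup : S.sup id = 2 * n - 5) (hdS : d ∉ S) :
    d = n - 6 ∧
      S = insert (2 * n - 5) (insert (n + 1) (insert (n - 2) (insert (n - 4)
        (insert (n - 5) (Finset.Icc 1 (n - 7)))))) := by
  obtain ⟨⟨⟨hpos, hcard, hsum⟩, hunref⟩, hmax⟩ := h
  rcases classify n d S hn hd1 hd2 hpos hcard hsum hunref hsup hdS with ⟨hd, hchar⟩ | hd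
  · refine ⟨hd, ?_⟩
    ext x
    simp only [Finset.mem_insert, Finset.mem_Icc]
    exact hchar x
  · exfalso
    obtain ⟨hWp, hWsup⟩ := witnessW n hn
    have hc := hmax _ (by rw [hd]; exact hWp)
    rw [hWsup, hsup] at hc
    omega
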